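/- Let G = (V,E) be a finite simple graph admitting a bcc-k-completion, suppose that for every pair of nonadjacent vertices u, v of G at most k vertices w are such that {u, v, w} is an independent set of size 3 and at most k induced 4-cycles of G contain both u and v (as a nonadjacent pair), and suppose every bcc-clean simple K-join of G has at most 2(k + 1) vertices. Then every simple K-join of G has at most 3k^2 + 6k + 2 vertices. -/

import Mathlib

open SimpleGraph Finset

variable {V : Type*}

/-- `f` is an (injective, hence linear) umbrella ordering of the graph `G`. -/
def IsUmbrellaOrdering (G : SimpleGraph V) (f : V → ℕ) : Prop :=
  Function.Injective f ∧
    ∀ u v w : V, f u < f v → f v < f w → G.Adj u w → G.Adj u v ∧ G.Adj v w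

/-- A graph is a proper interval graph iff it admits an umbrella ordering. -/
def IsProperIntervalGraph (G : SimpleGraph V) : Prop :=
  ∃ f : V → ℕ, IsUmbrellaOrdering G f

/-- The graph `G + F` obtained by adding the set `F` of pairs as edges. -/
def addEdges (G : SimpleGraph V) (F : Finset (Sym2 V)) : SimpleGraph V :=
  G ⊔ SimpleGraph.fromEdgeSet ↑F

/-- `F` is a completion of `G`: a set of non-loop non-edges whose addition
makes `G` a proper interval graph. -/
def IsCompletion (G : SimpleGraph V) (F : Finset (Sym2 V)) : Prop :=
  (∀ e ∈ F, ¬ e.IsDiag) ∧ (∀ e ∈ F, e ∉ G.edgeSet) ∧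
    IsProperIntervalGraph (addEdges G F)

/-- `F` is a `k`-completion of `G`. -/
def IsKCompletion (G : SimpleGraph V) (k : ℕ) (F : Finset (Sym2 V)) : Prop :=
  IsCompletion G F ∧ F.card ≤ k

/-- `uv` is an extremal edge of `G` with respect to the ordering `f`. -/
def IsExtremalEdge (G : SimpleGraph V) (f : V → ℕ) (u v : V) : Prop :=
  G.Adj u v ∧ f u < f v ∧
    ∀ u' v' : V, G.Adj u' v' → f u' ≤ f u → f v ≤ f v' → u' = u ∧ v' = v

/-- `c` is the center and `l₁, l₂, l₃` the leaves of an induced claw of `G`. -/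
def IsClaw (G : SimpleGraph V) (c l₁ l₂ l₃ : V) : Prop :=
  G.Adj c l₁ ∧ G.Adj c l₂ ∧ G.Adj c l₃ ∧
    ¬ G.Adj l₁ l₂ ∧ ¬ G.Adj l₁ l₃ ∧ ¬ G.Adj l₂ l₃ ∧ l₁ ≠ l₂ ∧ l₁ ≠ l₃ ∧ l₂ ≠ l₃

/-- `a b c d` is an induced 4-cycle of `G` (in this cyclic order). -/
def IsInducedC4 (G : SimpleGraph V) (a b c d : V) : Prop :=
  G.Adj a b ∧ G.Adj b c ∧ G.Adj c d ∧ G.Adj d a ∧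
    ¬ G.Adj a c ∧ ¬ G.Adj b d ∧ a ≠ c ∧ b ≠ d

/-- `x` belongs to some claw of `G` (as center or leaf). -/
def InClaw (G : SimpleGraph V) (x : V) : Prop :=
  ∃ a b c d, IsClaw G a b c d ∧ (x = a ∨ x = b ∨ x = c ∨ x = d)

/-- `x` belongs to some induced 4-cycle of `G`. -/
def InC4 (G : SimpleGraph V) (x : V) : Prop :=
  ∃ a b c d, IsInducedC4 G a b c d ∧ (x = a ∨ x = b ∨ x = c ∨ x = d)

/-- `{x, y, z}` is an independent set of size 3 (a `3K₁`) of `G`. -/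
def IsInd3 (G : SimpleGraph V) (x y z : V) : Prop :=
  x ≠ y ∧ x ≠ z ∧ y ≠ z ∧ ¬ G.Adj x y ∧ ¬ G.Adj x z ∧ ¬ G.Adj y z

/-- `x` belongs to some independent set of size 3 of `G`. -/
def InInd3 (G : SimpleGraph V) (x : V) : Prop := ∃ y z, IsInd3 G x y z

/-- `G` is sunflower-reduced (for the parameter `k`). -/
def SunflowerReduced (G : SimpleGraph V) (k : ℕ) : Prop :=
  ∀ u v : V, u ≠ v → ¬ G.Adj u v →
    {w : V | ∃ c, IsClaw G c u v w}.ncard ≤ k ∧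
    {e : Sym2 V | ∃ a b, e = s(a, b) ∧ IsInducedC4 G u a v b}.ncard ≤ k

/-- `u` and `v` are true twins of `G`: they have the same closed neighborhood. -/
def TrueTwins (G : SimpleGraph V) (u v : V) : Prop :=
  insert u (G.neighborSet u) = insert v (G.neighborSet v)

/-- `b : Fin p → V` enumerates a `K`-join of `G` whose complement is
partitioned into `N`, `L`, `R`, `C`. -/
structure KJoinWith (G : SimpleGraph V) {p : ℕ} (b : Fin p → V)
    (N L R C : Set V) : Prop where
  inj : Function.Injective b
  clique : ∀ i j : Fin p, i ≠ j → G.Adj (b i) (b j)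
  cover : ∀ v : V, v ∉ Set.range b → v ∈ N ∪ L ∪ R ∪ C
  disj : List.Pairwise Disjoint [Set.range b, N, L, R, C]
  nAdj : ∀ v ∈ N, ∀ i, G.Adj v (b i)
  cNotAdj : ∀ v ∈ C, ∀ i, ¬ G.Adj v (b i)
  lrAdj : ∀ v ∈ L ∪ R, ∃ i, G.Adj v (b i)
  lrNotAll : ∀ v ∈ L ∪ R, ∃ i, ¬ G.Adj v (b i)
  rFirst : ∀ r ∈ R, ∀ i : Fin p, i.val = 0 → ¬ G.Adj r (b i)
  lLast : ∀ x ∈ L, ∀ i : Fin p, i.val = p - 1 → ¬ G.Adj x (b i)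
  rMono : ∀ i j : Fin p, i.val + 1 = j.val → ∀ r ∈ R, G.Adj (b i) r → G.Adj (b j) r
  lMono : ∀ i j : Fin p, i.val + 1 = j.val → ∀ x ∈ L, G.Adj (b j) x → G.Adj (b i) x

/-- `B ⊆ V` is a `K`-join of `G`. -/
def IsKJoin (G : SimpleGraph V) (B : Set V) : Prop :=
  ∃ (p : ℕ) (b : Fin p → V) (N L R C : Set V),
    Set.range b = B ∧ KJoinWith G b N L R C

/-- `B` is a clean `K`-join: none of its vertices belongs to a claw or an
induced 4-cycle of `G`. -/
def IsCleanKJoin (G : SimpleGraph V) (B : Set V) : Prop :=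
  IsKJoin G B ∧ ∀ x ∈ B, ¬ InClaw G x ∧ ¬ InC4 G x

/-- `B ⊆ V` is a simple `K`-join of `G` (one of `L`, `R` is empty). -/
def IsSimpleKJoin (G : SimpleGraph V) (B : Set V) : Prop :=
  ∃ (p : ℕ) (b : Fin p → V) (N L R C : Set V),
    Set.range b = B ∧ KJoinWith G b N L R C ∧ (L = ∅ ∨ R = ∅)

/-- `B` is bcc-clean: none of its vertices belongs to a `3K₁` or an induced
4-cycle of `G`. -/
def IsBccClean (G : SimpleGraph V) (B : Set V) : Prop :=
  ∀ x ∈ B, ¬ InInd3 G x ∧ ¬ InC4 G x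

/-- `b : Fin p → V` enumerates (in umbrella order) a 1-branch of `G` with
complement partitioned into `R`, `C`; `b l` is the neighbor of the last
vertex `b (p-1)` of minimal index.  The attachment clique is
`B₁ = {b i : l ≤ i}` and `B^R = {b i : i < l}`. -/
structure OneBranch (G : SimpleGraph V) {p : ℕ} (b : Fin p → V)
    (R C : Set V) (l : Fin p) : Prop where
  pos : 0 < p
  inj : Function.Injective b
  umbrella : ∀ i j m : Fin p, i < j → j < m → G.Adj (b i) (b m) →
    G.Adj (b i) (b j) ∧ G.Adj (b j) (b m)
  connB : (G.induce (Set.range b)).Connected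
  cover : ∀ v : V, v ∉ Set.range b → v ∈ R ∪ C
  disj : List.Pairwise Disjoint [Set.range b, R, C]
  noBC : ∀ v ∈ C, ∀ i, ¬ G.Adj v (b i)
  rNbr : ∀ v ∈ R, ∃ i, G.Adj v (b i)
  lMin : ∀ j : Fin p, j < l → ¬ G.Adj (b j) (b ⟨p - 1, Nat.sub_lt pos Nat.one_pos⟩)
  lNbr : l.val = p - 1 ∨ G.Adj (b l) (b ⟨p - 1, Nat.sub_lt pos Nat.one_pos⟩)
  noEarlyR : ∀ j : Fin p, j < l → ∀ r ∈ R, ¬ G.Adj r (b j)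
  rMono : ∀ i j : Fin p, l ≤ i → i.val + 1 = j.val → ∀ r ∈ R,
    G.Adj (b i) r → G.Adj (b j) r

/-- `b : Fin p → V` enumerates (in umbrella order) a 2-branch of `G` with
complement partitioned into `L`, `R`, `C`; `b l` is the neighbor of `b (p-1)`
of minimal index and `b l'` is the neighbor of `b 0` of maximal index.  The
attachment cliques are `B₁ = {b i : i ≤ l'}` and `B₂ = {b i : l ≤ i}`, and
`B^R = {b i : l' < i < l}`. -/
structure TwoBranch (G : SimpleGraph V) {p : ℕ} (b : Fin p → V)
    (L R C : Set V) (l l' : Fin p) : Prop where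
  pos : 0 < p
  inj : Function.Injective b
  umbrella : ∀ i j m : Fin p, i < j → j < m → G.Adj (b i) (b m) →
    G.Adj (b i) (b j) ∧ G.Adj (b j) (b m)
  connB : (G.induce (Set.range b)).Connected
  cover : ∀ v : V, v ∉ Set.range b → v ∈ L ∪ R ∪ C
  disj : List.Pairwise Disjoint [Set.range b, L, R, C]
  noBC : ∀ v ∈ C, ∀ i, ¬ G.Adj v (b i)
  lNbrEx : ∀ v ∈ L, ∃ i, G.Adj v (b i)
  rNbrEx : ∀ v ∈ R, ∃ i, G.Adj v (b i)
  lMin : ∀ j : Fin p, j < l → ¬ G.Adj (b j) (b ⟨p - 1, Nat.sub_lt pos Nat.one_pos⟩)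
  lNbr : l.val = p - 1 ∨ G.Adj (b l) (b ⟨p - 1, Nat.sub_lt pos Nat.one_pos⟩)
  lMax' : ∀ j : Fin p, l' < j → ¬ G.Adj (b ⟨0, pos⟩) (b j)
  lNbr' : l'.val = 0 ∨ G.Adj (b ⟨0, pos⟩) (b l')
  noEarlyR : ∀ j : Fin p, j < l → ∀ r ∈ R, ¬ G.Adj r (b j)
  noLateL : ∀ j : Fin p, l' < j → ∀ v ∈ L, ¬ G.Adj v (b j)
  rMono : ∀ i j : Fin p, l ≤ i → i.val + 1 = j.val → ∀ r ∈ R,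
    G.Adj (b i) r → G.Adj (b j) r
  lMono : ∀ i j : Fin p, j ≤ l' → i.val + 1 = j.val → ∀ v ∈ L,
    G.Adj (b j) v → G.Adj (b i) v

/-- `e : Fin q → Fin p` lists the last indices of the `q` K-joins of the
K-join decomposition of the 2-branch enumerated by `b` (with attachment
cliques ending at `l'` resp. starting at `l`). -/
def KJoinDecomp (G : SimpleGraph V) {p : ℕ} (b : Fin p → V) (l l' : Fin p)
    (q : ℕ) (e : Fin q → Fin p) : Prop :=
  0 < q ∧
  (∀ i : Fin q, i.val = 0 → e i = l') ∧
  (∀ i : Fin q, i.val = q - 1 → (e i).val = p - 1) ∧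
  StrictMono e ∧
  ∀ i j : Fin q, i.val + 1 = j.val →
    ∃ hs : (e i).val + 1 < p,
      (j.val + 1 < q →
        (⟨(e i).val + 1, hs⟩ : Fin p) < l ∧
        G.Adj (b ⟨(e i).val + 1, hs⟩) (b (e j)) ∧
        ∀ m : Fin p, G.Adj (b ⟨(e i).val + 1, hs⟩) (b m) → m ≤ e j) ∧
      (j.val + 1 = q → l ≤ (⟨(e i).val + 1, hs⟩ : Fin p))

/-- `G` is a bi-clique chain graph: two cliques joined by a join. -/
def IsBicliqueChain (G : SimpleGraph V) : Prop :=
  ∃ (q : ℕ) (x : Fin q → V) (Y : Set V),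
    Function.Injective x ∧
    Disjoint (Set.range x) Y ∧
    (∀ v : V, v ∈ Set.range x ∨ v ∈ Y) ∧
    (∀ i j : Fin q, i ≠ j → G.Adj (x i) (x j)) ∧
    G.IsClique Y ∧
    (∀ i j : Fin q, i ≤ j → ∀ y ∈ Y, G.Adj (x i) y → G.Adj (x j) y)

/-- `F` is a bcc-`k`-completion of `G`. -/
def IsBccKCompletion (G : SimpleGraph V) (k : ℕ) (F : Finset (Sym2 V)) : Prop :=
  (∀ e ∈ F, ¬ e.IsDiag) ∧ (∀ e ∈ F, e ∉ G.edgeSet) ∧ F.card ≤ k ∧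
    IsBicliqueChain (addEdges G F)

/-!
Adding the at most `k` pairs of a bcc-completion `F` destroys every `3K₁` and every induced `C₄`
of `G`, so each of them has a pair of `F` as an edge (of the `3K₁`) or as a diagonal (of the
`C₄`). By the reduction hypothesis a pair of `F` lies in at most `k` such `3K₁`s and `k` such
`C₄`s, so at most `k (3k + 2)` vertices of `G` lie in a `3K₁` or an induced `C₄`. Removing them
from a simple `K`-join leaves a bcc-clean simple `K`-join, which has at most `2 (k + 1)` vertices.
-/

theorem Set.Finite.ncard_biUnion_le_mul {ι α : Type*} {t : Set ι} (ht : t.Finite)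
    {s : ι → Set α} {n : ℕ} (hs : ∀ i ∈ t, (s i).ncard ≤ n) :
    (⋃ i ∈ t, s i).ncard ≤ t.ncard * n := by
  lift t to Finset ι using ht
  calc (⋃ i ∈ (t : Set ι), s i).ncard ≤ ∑ i ∈ t, (s i).ncard := by
        simpa using t.set_ncard_biUnion_le s
    _ ≤ t.card * n := by simpa using Finset.sum_le_card_nsmul t _ n hs
    _ = (t : Set ι).ncard * n := by rw [Set.ncard_coe_finset]

theorem Sym2.ncard_setOf_mem_le (e : Sym2 V) : {x | x ∈ e}.ncard ≤ 2 := by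
  induction e using Sym2.ind with
  | _ y z =>
    have : {x | x ∈ s(y, z)} = {y, z} := by ext; simp
    rw [this]
    exact (Set.ncard_insert_le _ _).trans (by simp)

section Obstructions

variable {G : SimpleGraph V}

theorem addEdges_adj {F : Finset (Sym2 V)} {u v : V} :
    (addEdges G F).Adj u v ↔ G.Adj u v ∨ (s(u, v) ∈ F ∧ u ≠ v) := by
  simp [addEdges, SimpleGraph.fromEdgeSet_adj]

theorem IsInd3.swap {x y z : V} (h : IsInd3 G x y z) : IsInd3 G y x z := by
  unfold IsInd3 at *
  grind [SimpleGraph.adj_comm]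

theorem IsInd3.rotate {x y z : V} (h : IsInd3 G x y z) : IsInd3 G y z x := by
  unfold IsInd3 at *
  grind [SimpleGraph.adj_comm]

theorem IsInducedC4.rotate {a b c d : V} (h : IsInducedC4 G a b c d) :
    IsInducedC4 G b c d a := by
  unfold IsInducedC4 at *
  grind [SimpleGraph.adj_comm]

theorem InC4.exists_isInducedC4 {x : V} (h : InC4 G x) : ∃ b c d, IsInducedC4 G x b c d := by
  obtain ⟨a, b, c, d, h, rfl | rfl | rfl | rfl⟩ := h
  exacts [⟨_, _, _, h⟩, ⟨_, _, _, h.rotate⟩, ⟨_, _, _, h.rotate.rotate⟩,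
    ⟨_, _, _, h.rotate.rotate.rotate⟩]

theorem IsBicliqueChain.not_isInd3 (h : IsBicliqueChain G) (x y z : V) : ¬ IsInd3 G x y z := by
  obtain ⟨q, f, Y, -, -, hcov, hX, hY, -⟩ := h
  have same_side : ∀ u v, u ≠ v → (u ∈ Set.range f ∧ v ∈ Set.range f) ∨ (u ∈ Y ∧ v ∈ Y) →
      G.Adj u v := by
    rintro u v huv (⟨⟨i, rfl⟩, ⟨j, rfl⟩⟩ | ⟨hu, hv⟩)
    · exact hX i j (ne_of_apply_ne f huv)
    · exact hY hu hv huv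
  rintro ⟨hxy, hxz, hyz, nxy, nxz, nyz⟩
  rcases hcov x with hx | hx <;> rcases hcov y with hy | hy <;> rcases hcov z with hz | hz <;>
    first
    | exact nxy (same_side x y hxy (by tauto))
    | exact nxz (same_side x z hxz (by tauto))
    | exact nyz (same_side y z hyz (by tauto))

theorem IsBicliqueChain.not_isInducedC4 (h : IsBicliqueChain G) (a b c d : V) :
    ¬ IsInducedC4 G a b c d := by
  obtain ⟨q, f, Y, -, -, hcov, hX, hY, hmono⟩ := h
  have split : ∀ u v, u ≠ v → ¬ G.Adj u v →
      (u ∈ Set.range f ∧ v ∈ Y) ∨ (u ∈ Y ∧ v ∈ Set.range f) := by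
    intro u v huv hnadj
    rcases hcov u with ⟨i, rfl⟩ | hu <;> rcases hcov v with ⟨j, rfl⟩ | hv
    · exact absurd (hX i j (ne_of_apply_ne f huv)) hnadj
    · exact Or.inl ⟨⟨i, rfl⟩, hv⟩
    · exact Or.inr ⟨hu, ⟨j, rfl⟩⟩
    · exact absurd (hY hu hv huv) hnadj
  -- up to rotation the diagonal `ac` runs from `X` to `Y`; then the `X`-ends of the two
  -- diagonals have incomparable neighbourhoods in `Y`
  have key : ∀ a b c d, IsInducedC4 G a b c d → a ∈ Set.range f → c ∈ Y → False := by
    rintro a b c d ⟨hab, hbc, hcd, hda, nac, nbd, -, hbd⟩ ⟨i, rfl⟩ hc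
    rcases split b d hbd nbd with ⟨⟨j, rfl⟩, hd⟩ | ⟨hb, ⟨j, rfl⟩⟩
    · rcases le_total i j with hij | hij
      · exact nbd (hmono i j hij d hd hda.symm)
      · exact nac (hmono j i hij c hc hbc)
    · rcases le_total i j with hij | hij
      · exact nbd (hmono i j hij b hb hab).symm
      · exact nac (hmono j i hij c hc hcd.symm)
  intro hC4
  rcases split a c hC4.2.2.2.2.2.2.1 hC4.2.2.2.2.1 with ⟨ha, hc⟩ | ⟨ha, hc⟩
  · exact key a b c d hC4 ha hc
  · exact key c d a b hC4.rotate.rotate hc ha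

/-- Adding the edge `uv` only destroys `3K₁`s and induced 4-cycles inside this set. -/
def obstructionSpan (G : SimpleGraph V) (u v : V) : Set V :=
  {u, v} ∪ {w | IsInd3 G u v w} ∪
    ⋃ e ∈ {e : Sym2 V | ∃ a b, e = s(a, b) ∧ IsInducedC4 G u a v b}, {x | x ∈ e}

theorem obstructionSpan_comm (u v : V) : obstructionSpan G u v = obstructionSpan G v u := by
  have diagonals : ∀ u v : V, {e : Sym2 V | ∃ a b, e = s(a, b) ∧ IsInducedC4 G u a v b} ⊆
      {e : Sym2 V | ∃ a b, e = s(a, b) ∧ IsInducedC4 G v a u b} := by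
    rintro u v _ ⟨a, b, rfl, h⟩
    exact ⟨b, a, Sym2.eq_swap, h.rotate.rotate⟩
  have ind3 : ∀ u v : V, {w | IsInd3 G u v w} ⊆ {w | IsInd3 G v u w} := fun _ _ _ => IsInd3.swap
  unfold obstructionSpan
  rw [Set.pair_comm, (diagonals u v).antisymm (diagonals v u), (ind3 u v).antisymm (ind3 v u)]

def obstructionSpanSym2 (G : SimpleGraph V) : Sym2 V → Set V :=
  Sym2.lift ⟨obstructionSpan G, obstructionSpan_comm⟩

theorem ncard_obstructionSpan_le [Finite V] {u v : V} {k : ℕ}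
    (h3 : {w | IsInd3 G u v w}.ncard ≤ k)
    (h4 : {e : Sym2 V | ∃ a b, e = s(a, b) ∧ IsInducedC4 G u a v b}.ncard ≤ k) :
    (obstructionSpan G u v).ncard ≤ 3 * k + 2 := by
  have hC4 : (⋃ e ∈ {e : Sym2 V | ∃ a b, e = s(a, b) ∧ IsInducedC4 G u a v b},
      {x | x ∈ e}).ncard ≤ k * 2 :=
    (Set.toFinite _).ncard_biUnion_le_mul (fun e _ => e.ncard_setOf_mem_le) |>.trans
      (Nat.mul_le_mul_right 2 h4)
  calc (obstructionSpan G u v).ncard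
      ≤ ({u, v} : Set V).ncard + {w | IsInd3 G u v w}.ncard + k * 2 :=
        (Set.ncard_union_le _ _).trans (add_le_add (Set.ncard_union_le _ _) hC4)
    _ ≤ 2 + k + k * 2 := by gcongr; exact (Set.ncard_insert_le _ _).trans (by simp)
    _ = 3 * k + 2 := by ring

theorem IsInd3.exists_mem_obstructionSpanSym2 {F : Finset (Sym2 V)} {x y z : V}
    (h : IsInd3 G x y z) (hF : ¬ IsInd3 (addEdges G F) x y z) :
    ∃ e ∈ F, x ∈ obstructionSpanSym2 G e := by
  have hpair : s(x, y) ∈ F ∨ s(x, z) ∈ F ∨ s(y, z) ∈ F := by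
    by_contra! hnot
    obtain ⟨hxy, hxz, hyz, nxy, nxz, nyz⟩ := h
    exact hF ⟨hxy, hxz, hyz, by simp [addEdges_adj, nxy, hnot.1],
      by simp [addEdges_adj, nxz, hnot.2.1], by simp [addEdges_adj, nyz, hnot.2.2]⟩
  rcases hpair with he | he | he
  · exact ⟨_, he, Or.inl (Or.inl (Or.inl rfl))⟩
  · exact ⟨_, he, Or.inl (Or.inl (Or.inl rfl))⟩
  · exact ⟨_, he, Or.inl (Or.inr h.rotate)⟩

theorem IsInducedC4.exists_mem_obstructionSpanSym2 {F : Finset (Sym2 V)} {a b c d : V}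
    (h : IsInducedC4 G a b c d) (hF : ¬ IsInducedC4 (addEdges G F) a b c d) :
    ∃ e ∈ F, a ∈ obstructionSpanSym2 G e := by
  have hdiag : s(a, c) ∈ F ∨ s(b, d) ∈ F := by
    by_contra! hnot
    obtain ⟨hab, hbc, hcd, hda, nac, nbd, hac, hbd⟩ := h
    exact hF ⟨by simp [addEdges_adj, hab], by simp [addEdges_adj, hbc],
      by simp [addEdges_adj, hcd], by simp [addEdges_adj, hda], by simp [addEdges_adj, nac, hnot.1],
      by simp [addEdges_adj, nbd, hnot.2], hac, hbd⟩
  rcases hdiag with he | he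
  · exact ⟨_, he, Or.inl (Or.inl (Or.inl rfl))⟩
  · exact ⟨_, he, Or.inr (Set.mem_biUnion ⟨c, a, rfl, h.rotate⟩ (Sym2.mem_mk_right c a))⟩

theorem IsBicliqueChain.subset_biUnion_obstructionSpanSym2 {F : Finset (Sym2 V)}
    (hF : IsBicliqueChain (addEdges G F)) :
    {x | InInd3 G x ∨ InC4 G x} ⊆ ⋃ e ∈ (F : Set (Sym2 V)), obstructionSpanSym2 G e := by
  rintro x (⟨y, z, h⟩ | hx)
  · obtain ⟨e, he, hxe⟩ := h.exists_mem_obstructionSpanSym2 (hF.not_isInd3 x y z)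
    exact Set.mem_biUnion he hxe
  · obtain ⟨b, c, d, h⟩ := hx.exists_isInducedC4
    obtain ⟨e, he, hxe⟩ := h.exists_mem_obstructionSpanSym2 (hF.not_isInducedC4 x b c d)
    exact Set.mem_biUnion he hxe

theorem IsBccKCompletion.ncard_setOf_inInd3_or_inC4_le [Finite V] {k : ℕ} {F : Finset (Sym2 V)}
    (hF : IsBccKCompletion G k F)
    (hred : ∀ u v : V, u ≠ v → ¬ G.Adj u v →
      {w : V | IsInd3 G u v w}.ncard ≤ k ∧
      {e : Sym2 V | ∃ a b : V, e = s(a, b) ∧ IsInducedC4 G u a v b}.ncard ≤ k) :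
    {x | InInd3 G x ∨ InC4 G x}.ncard ≤ k * (3 * k + 2) := by
  obtain ⟨hdiag, hnonedge, hcard, hbcc⟩ := hF
  have hspan : ∀ e ∈ (F : Set (Sym2 V)), (obstructionSpanSym2 G e).ncard ≤ 3 * k + 2 := by
    intro e he
    induction e using Sym2.ind with
    | _ u v =>
      have huv : u ≠ v := fun h => hdiag _ he (by simp [h])
      have hnadj : ¬ G.Adj u v := fun h => hnonedge _ he h
      exact ncard_obstructionSpan_le (hred u v huv hnadj).1 (hred u v huv hnadj).2
  calc {x | InInd3 G x ∨ InC4 G x}.ncard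
      ≤ (⋃ e ∈ (F : Set (Sym2 V)), obstructionSpanSym2 G e).ncard :=
        Set.ncard_le_ncard hbcc.subset_biUnion_obstructionSpanSym2
    _ ≤ (F : Set (Sym2 V)).ncard * (3 * k + 2) := F.finite_toSet.ncard_biUnion_le_mul hspan
    _ ≤ k * (3 * k + 2) := by rw [Set.ncard_coe_finset]; gcongr

end Obstructions

namespace KJoinWith

variable {G : SimpleGraph V} {p : ℕ} {b : Fin p → V} {N L R C : Set V}

theorem monotone_adj_of_mem_R (hK : KJoinWith G b N L R C) {r : V} (hr : r ∈ R) :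
    Monotone fun i => G.Adj (b i) r := by
  cases p with
  | zero => exact fun i => i.elim0
  | succ n => exact Fin.monotone_iff_le_succ.2 fun i => hK.rMono _ _ rfl r hr

theorem antitone_adj_of_mem_L (hK : KJoinWith G b N L R C) {x : V} (hx : x ∈ L) :
    Antitone fun i => G.Adj (b i) x := by
  cases p with
  | zero => exact fun i => i.elim0
  | succ n => exact Fin.antitone_iff_succ_le.2 fun i => hK.lMono _ _ rfl x hx

theorem mem_L_or_mem_R (hK : KJoinWith G b N L R C) {v : V} {i j : Fin p}
    (hi : G.Adj v (b i)) (hj : ¬ G.Adj v (b j)) (hvj : v ≠ b j) : v ∈ L ∨ v ∈ R := by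
  by_cases hb : v ∈ Set.range b
  · obtain ⟨m, rfl⟩ := hb
    exact absurd (hK.clique m j fun h => hvj (congrArg b h)) hj
  rcases hK.cover v hb with ((hN | hL) | hR) | hC
  · exact absurd (hK.nAdj v hN j) hj
  · exact Or.inl hL
  · exact Or.inr hR
  · exact absurd hi (hK.cNotAdj v hC i)

/-- Outside vertices adjacent to all or to none of the subsequence move to `N` or `C`; the others
stay in `L` or `R`. -/
theorem comp_strictMono (hK : KJoinWith G b N L R C) {q : ℕ} {g : Fin q → Fin p}
    (hg : StrictMono g) :
    ∃ N' L' R' C', KJoinWith G (b ∘ g) N' L' R' C' ∧ L' ⊆ L ∧ R' ⊆ R := by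
  set full : V → Prop := fun v => ∀ i, G.Adj v (b (g i))
  set none : V → Prop := fun v => ∀ i, ¬ G.Adj v (b (g i))
  refine ⟨{v | v ∉ Set.range (b ∘ g) ∧ full v}, {v | v ∈ L ∧ ¬ full v ∧ ¬ none v},
    {v | v ∈ R ∧ ¬ full v ∧ ¬ none v}, {v | v ∉ Set.range (b ∘ g) ∧ none v ∧ ¬ full v},
    ⟨hK.inj.comp hg.injective, fun i j hij => hK.clique _ _ (hg.injective.ne hij), ?_, ?_,
      fun v hv => hv.2, fun v hv => hv.2.1, ?_, ?_, ?_, ?_, ?_, ?_⟩,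
    fun v hv => hv.1, fun v hv => hv.1⟩
  · intro v hv
    by_cases hfull : full v
    · exact Or.inl (Or.inl (Or.inl ⟨hv, hfull⟩))
    by_cases hnone : none v
    · exact Or.inr ⟨hv, hnone, hfull⟩
    obtain ⟨j, hj⟩ := not_forall.1 hfull
    obtain ⟨i, hi⟩ := not_forall_not.1 hnone
    rcases hK.mem_L_or_mem_R hi hj fun h => hv ⟨j, h.symm⟩ with hL | hR
    · exact Or.inl (Or.inl (Or.inr ⟨hL, hfull, hnone⟩))
    · exact Or.inl (Or.inr ⟨hR, hfull, hnone⟩)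
  · have hdisj := hK.disj
    have hrange : ∀ v ∈ Set.range (b ∘ g), v ∈ Set.range b := fun _ ⟨i, hi⟩ => ⟨g i, hi⟩
    simp only [List.pairwise_cons, List.mem_cons, List.not_mem_nil, or_false, forall_eq_or_imp,
      forall_eq, List.Pairwise.nil, and_true, Set.disjoint_left, Set.mem_ofPred_eq] at hdisj ⊢
    grind
  · rintro v (⟨-, -, hv⟩ | ⟨-, -, hv⟩) <;> simpa [none] using hv
  · rintro v (⟨-, hv, -⟩ | ⟨-, hv, -⟩) <;> simpa [full] using hv
  · rintro r ⟨hr, hfull, -⟩ i hi hadj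
    exact hfull fun j => (hK.monotone_adj_of_mem_R hr
      (hg.monotone (show i ≤ j from Fin.le_def.2 (by omega))) hadj.symm).symm
  · rintro x ⟨hx, hfull, -⟩ i hi hadj
    exact hfull fun j => (hK.antitone_adj_of_mem_L hx
      (hg.monotone (show j ≤ i from Fin.le_def.2 (by omega))) hadj.symm).symm
  · rintro i j hij r ⟨hr, -⟩
    exact hK.monotone_adj_of_mem_R hr (hg.monotone (Fin.le_def.2 (by omega)))
  · rintro i j hij x ⟨hx, -⟩
    exact hK.antitone_adj_of_mem_L hx (hg.monotone (Fin.le_def.2 (by omega)))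

end KJoinWith

theorem IsSimpleKJoin.mono {G : SimpleGraph V} {B B' : Set V} (hB : IsSimpleKJoin G B)
    (hB' : B' ⊆ B) : IsSimpleKJoin G B' := by
  classical
  obtain ⟨p, b, N, L, R, C, rfl, hK, hLR⟩ := hB
  set s := Finset.univ.filter fun i => b i ∈ B'
  obtain ⟨N', L', R', C', hK', hL', hR'⟩ :=
    hK.comp_strictMono (s.orderEmbOfFin rfl).strictMono
  refine ⟨_, _, N', L', R', C', ?_, hK', ?_⟩
  · rw [Set.range_comp, Finset.range_orderEmbOfFin]
    ext v
    simp only [s, Finset.coe_filter, Finset.mem_univ, true_and, Set.mem_image, Set.mem_ofPred_eq]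
    constructor
    · rintro ⟨i, hi, rfl⟩
      exact hi
    · intro hv
      obtain ⟨i, rfl⟩ := hB' hv
      exact ⟨i, hv, rfl⟩
  · exact hLR.imp (Set.subset_eq_empty hL') (Set.subset_eq_empty hR')

/-- In a reduced positive instance of the bi-clique chain completion problem
whose bcc-clean simple `K`-joins have at most `2(k + 1)` vertices, every
simple `K`-join has at most `3k² + 6k + 2` vertices. -/
theorem bcc_simple_kjoin_size_bound [Fintype V] (G : SimpleGraph V) (k : ℕ)
    (hpos : ∃ F : Finset (Sym2 V), IsBccKCompletion G k F)
    (hred : ∀ u v : V, u ≠ v → ¬ G.Adj u v →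
      {w : V | IsInd3 G u v w}.ncard ≤ k ∧
      {e : Sym2 V | ∃ a b : V, e = s(a, b) ∧ IsInducedC4 G u a v b}.ncard ≤ k)
    (hclean : ∀ B : Set V, IsSimpleKJoin G B → IsBccClean G B →
      B.ncard ≤ 2 * (k + 1)) :
    ∀ B : Set V, IsSimpleKJoin G B → B.ncard ≤ 3 * k ^ 2 + 6 * k + 2 := by
  intro B hB
  obtain ⟨F, hF⟩ := hpos
  set D := {x | InInd3 G x ∨ InC4 G x}
  have hD : D.ncard ≤ k * (3 * k + 2) := hF.ncard_setOf_inInd3_or_inC4_le hred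
  have hBD : (B \ D).ncard ≤ 2 * (k + 1) :=
    hclean _ (hB.mono Set.sdiff_subset) fun x hx => not_or.1 hx.2
  calc B.ncard ≤ (B \ D).ncard + D.ncard := Set.ncard_le_ncard_sdiff_add_ncard B D
    _ ≤ 3 * k ^ 2 + 6 * k + 2 := by nlinarith
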